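/- arXiv:1107.2644 — 3 statements merged into one kernel-verified Lean document; each statement's English description precedes it below -/
import Mathlib

section
/- Every Markov triple lies in the smallest set of triples of positive integers that contains (1, 1, 1) and is closed under permutations of the entries and under the mutation (a, b, c) ↦ (a, b, 3ab − c). Equivalently, every Markov triple is obtained from (1, 1, 1) by a finite sequence of mutations and permutations. -/
/-- The smallest set of triples of positive integers containing `(1, 1, 1)` and
closed under permutations of the entries and under the mutation
`(a, b, c) ↦ (a, b, 3ab − c)`. -/
inductive MarkovGen : ℕ × ℕ × ℕ → Prop
  | base : MarkovGen (1, 1, 1)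
  | swap {a b c : ℕ} : MarkovGen (a, b, c) → MarkovGen (b, a, c)
  | rotate {a b c : ℕ} : MarkovGen (a, b, c) → MarkovGen (b, c, a)
  | mutate {a b c : ℕ} : MarkovGen (a, b, c) → MarkovGen (a, b, 3 * a * b - c)

namespace MarkovGen

lemma perm132 {a b c : ℕ} (h : MarkovGen (a, b, c)) : MarkovGen (a, c, b) :=
  (h.rotate).swap.rotate.rotate
lemma perm213 {a b c : ℕ} (h : MarkovGen (a, b, c)) : MarkovGen (b, a, c) := h.swap
lemma perm231 {a b c : ℕ} (h : MarkovGen (a, b, c)) : MarkovGen (b, c, a) := h.rotate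
lemma perm312 {a b c : ℕ} (h : MarkovGen (a, b, c)) : MarkovGen (c, a, b) := h.rotate.rotate
lemma perm321 {a b c : ℕ} (h : MarkovGen (a, b, c)) : MarkovGen (c, b, a) := h.rotate.swap

end MarkovGen

/-- Core descent step (Vieta jumping) for sorted triples. -/
lemma markov_core (n a b c : ℕ) (ha : 0 < a) (hb : 0 < b) (hc : 0 < c)
    (hab : a ≤ b) (hbc : b ≤ c)
    (h : a ^ 2 + b ^ 2 + c ^ 2 = 3 * a * b * c)
    (hn : a + b + c = n)
    (IH : ∀ a' b' c', 0 < a' → 0 < b' → 0 < c' →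
      a' ^ 2 + b' ^ 2 + c' ^ 2 = 3 * a' * b' * c' → a' + b' + c' < n →
      MarkovGen (a', b', c')) :
    MarkovGen (a, b, c) := by
  by_cases hb1 : b = 1
  · -- a = 1, b = 1, solve for c
    have ha1 : a = 1 := le_antisymm (hb1 ▸ hab) ha
    subst ha1; subst hb1
    have hc2 : c ≤ 2 := by nlinarith
    interval_cases c
    · exact MarkovGen.base
    · have := MarkovGen.base.mutate
      norm_num at this
      exact this
  · have hb2 : 2 ≤ b := by omega
    have hclt : c < 3 * a * b := by
      have h1 : c * c < 3 * a * b * c := by nlinarith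
      exact lt_of_mul_lt_mul_right h1 (le_of_lt hc)
    set d := 3 * a * b - c with hd
    have hdc : d + c = 3 * a * b := by omega
    have hdcmul : d * c = a ^ 2 + b ^ 2 := by nlinarith [hdc]
    have hdpos : 0 < d := by
      rcases Nat.eq_zero_or_pos d with h0 | h0
      · rw [h0] at hdcmul; nlinarith
      · exact h0
    have hdb : d < b := by
      by_contra hge
      push_neg at hge
      nlinarith [hdc, hdcmul, mul_le_mul hge hbc (Nat.zero_le b) (Nat.zero_le d)]
    have heq' : a ^ 2 + b ^ 2 + d ^ 2 = 3 * a * b * d := by nlinarith [hdc, hdcmul]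
    have hlt : a + b + d < n := by omega
    have hgen := IH a b d ha hb hdpos heq' hlt
    have := hgen.mutate
    have h3 : 3 * a * b - d = c := by omega
    rwa [h3] at this

/-- Every Markov triple (a triple of positive integers with
`a² + b² + c² = 3abc`) is obtained from `(1, 1, 1)` by a finite sequence of
mutations and permutations. -/
theorem markov_triple_mem_markovGen (a b c : ℕ) (ha : 0 < a) (hb : 0 < b) (hc : 0 < c)
    (h : a ^ 2 + b ^ 2 + c ^ 2 = 3 * a * b * c) :
    MarkovGen (a, b, c) := by
  generalize hn : a + b + c = n
  induction n using Nat.strong_induction_on generalizing a b c with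
  | _ n IH =>
    have IH' : ∀ a' b' c', 0 < a' → 0 < b' → 0 < c' →
        a' ^ 2 + b' ^ 2 + c' ^ 2 = 3 * a' * b' * c' → a' + b' + c' < n →
        MarkovGen (a', b', c') := fun a' b' c' h1 h2 h3 h4 h5 =>
      IH _ h5 a' b' c' h1 h2 h3 h4 rfl
    rcases le_total a b with hab | hab <;> rcases le_total b c with hbc | hbc <;>
      rcases le_total a c with hac | hac
    · exact markov_core n a b c ha hb hc hab hbc h hn IH'
    · exact markov_core n a b c ha hb hc hab hbc h hn IH'
    · exact (markov_core n a c b ha hc hb hac hbc (by linear_combination h) (by omega) IH').perm132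
    · exact (markov_core n c a b hc ha hb hac hab (by linear_combination h) (by omega) IH').perm231
    · exact (markov_core n b a c hb ha hc hab hac (by linear_combination h) (by omega) IH').perm213
    · exact (markov_core n b c a hb hc ha hbc hac (by linear_combination h) (by omega) IH').perm312
    · exact (markov_core n a c b ha hc hb hac hbc (by linear_combination h) (by omega) IH').perm132
    · exact (markov_core n c b a hc hb ha hbc hab (by linear_combination h) (by omega) IH').perm321
end

section
/- Let (a₁, a₂, a₃) be a Markov triple with a₁ > 1. Then a₂ is invertible modulo a₁, and in ℤ/a₁ℤ one has ((a₂² + a₃²)/a₁) · (a₂²)⁻¹ = 3 · a₂⁻¹ · a₃, where (a₂² + a₃²)/a₁ denotes the integer quotient (which exists since a₁ divides a₂² + a₃²). -/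
/-!
If `g = gcd(a₁, a₂) > 1`, then `g` also divides `a₃`, and dividing out `g²` gives a positive
solution of `x² + y² + z² = 3g·xyz`. Such equations with coefficient `k > 4` have no positive
solutions, by Vieta jumping: replacing the largest entry `z` by `kxy - z = (x² + y²)/z` gives a
smaller positive solution. So `a₂` is a unit mod `a₁`, and the quotient
`(a₂² + a₃²)/a₁ = 3a₂a₃ - a₁` reduces to `3a₂a₃` modulo `a₁`.
-/

section VietaJumping

variable {k x y z : ℕ}

lemma sq_add_sq_lt_sq_of_eq_mul (hk : 4 < k) (hx : 0 < x) (hy : 0 < y) (hxz : x ≤ z)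
    (hyz : y ≤ z) (h : x ^ 2 + y ^ 2 + z ^ 2 = k * x * y * z) : x ^ 2 + y ^ 2 < z ^ 2 := by
  by_contra! hle
  have hx2 : x ^ 2 ≤ x * y * z :=
    calc x ^ 2 = x * x := sq x
      _ ≤ x * z := Nat.mul_le_mul_left x hxz
      _ ≤ x * z * y := Nat.le_mul_of_pos_right _ hy
      _ = x * y * z := by ring
  have hy2 : y ^ 2 ≤ x * y * z :=
    calc y ^ 2 = y * y := sq y
      _ ≤ y * z := Nat.mul_le_mul_left y hyz
      _ ≤ y * z * x := Nat.le_mul_of_pos_right _ hx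
      _ = x * y * z := by ring
  have hk5 : 5 * (x * y * z) ≤ k * x * y * z := by
    rw [show k * x * y * z = k * (x * y * z) by ring]
    exact Nat.mul_le_mul_right _ hk
  nlinarith [mul_pos (mul_pos hx hy) (hy.trans_le hyz)]

lemma exists_lt_eq_mul_of_sq_add_sq_lt (hx : 0 < x) (hy : 0 < y) (hz : 0 < z)
    (hlt : x ^ 2 + y ^ 2 < z ^ 2) (h : x ^ 2 + y ^ 2 + z ^ 2 = k * x * y * z) :
    ∃ z', 0 < z' ∧ z' < z ∧ x ^ 2 + y ^ 2 + z' ^ 2 = k * x * y * z' := by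
  have hz_le : z ≤ k * x * y := Nat.le_of_mul_le_mul_right (by nlinarith) hz
  have hprod : z * (k * x * y - z) = x ^ 2 + y ^ 2 := by
    zify [hz_le] at h ⊢
    linear_combination -h
  refine ⟨k * x * y - z, ?_, ?_, ?_⟩
  · exact Nat.pos_of_mul_pos_left (hprod ▸ by positivity : 0 < z * (k * x * y - z))
  · exact Nat.lt_of_mul_lt_mul_left (hprod ▸ by nlinarith : z * (k * x * y - z) < z * z)
  · zify [hz_le] at h ⊢
    linear_combination h

theorem sq_add_sq_add_sq_ne_mul_of_four_lt (hk : 4 < k) (hx : 0 < x) (hy : 0 < y)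
    (hz : 0 < z) : x ^ 2 + y ^ 2 + z ^ 2 ≠ k * x * y * z := by
  induction hs : x + y + z using Nat.strong_induction_on generalizing x y z with
  | _ s ih =>
  wlog hmax : x ≤ z ∧ y ≤ z generalizing x y z
  · rcases le_total x y with hxy | hyx
    · intro h
      exact this hx hz hy (by omega) (by omega) (by linear_combination h)
    · intro h
      exact this hz hy hx (by omega) (by omega) (by linear_combination h)
  intro h
  obtain ⟨z', hz', hz'z, h'⟩ := exists_lt_eq_mul_of_sq_add_sq_lt hx hy hz
    (sq_add_sq_lt_sq_of_eq_mul hk hx hy hmax.1 hmax.2 h) h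
  exact ih (x + y + z') (by omega) hx hy hz' rfl h'

end VietaJumping

theorem Nat.coprime_of_sq_add_sq_add_sq_eq_mul {k x y z : ℕ} (hk : 3 ≤ k) (hx : 0 < x)
    (hy : 0 < y) (hz : 0 < z) (h : x ^ 2 + y ^ 2 + z ^ 2 = k * x * y * z) :
    Nat.Coprime x y := by
  by_contra hxy
  set g := Nat.gcd x y
  have hg : 2 ≤ g := by
    have := Nat.gcd_pos_of_pos_left y hx
    unfold Nat.Coprime at hxy
    omega
  have hgx : g ∣ x := Nat.gcd_dvd_left x y
  have hgy : g ∣ y := Nat.gcd_dvd_right x y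
  clear_value g
  obtain ⟨b₁, rfl⟩ := hgx
  obtain ⟨b₂, rfl⟩ := hgy
  have hg_sq_dvd : g ^ 2 ∣ z ^ 2 := by
    have hsum : g ^ 2 ∣ (g * b₁) ^ 2 + (g * b₂) ^ 2 := Dvd.intro (b₁ ^ 2 + b₂ ^ 2) (by ring)
    refine (Nat.dvd_add_right hsum).mp ?_
    rw [h]
    exact ⟨k * b₁ * b₂ * z, by ring⟩
  obtain ⟨b₃, rfl⟩ := (Nat.pow_dvd_pow_iff two_ne_zero).mp hg_sq_dvd
  have hscaled : b₁ ^ 2 + b₂ ^ 2 + b₃ ^ 2 = k * g * b₁ * b₂ * b₃ :=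
    Nat.eq_of_mul_eq_mul_left (show 0 < g ^ 2 by positivity) (by linear_combination h)
  exact sq_add_sq_add_sq_ne_mul_of_four_lt (by nlinarith) (Nat.pos_of_mul_pos_left hx)
    (Nat.pos_of_mul_pos_left hy) (Nat.pos_of_mul_pos_left hz) hscaled

lemma Nat.div_add_eq_of_sq_add_sq_add_sq_eq_mul {k x y z : ℕ} (hx : 0 < x)
    (h : x ^ 2 + y ^ 2 + z ^ 2 = k * x * y * z) : (y ^ 2 + z ^ 2) / x + x = k * y * z := by
  rw [← Nat.add_mul_div_left _ _ hx, show y ^ 2 + z ^ 2 + x * x = x * (k * y * z) by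
    linear_combination h, Nat.mul_div_cancel_left _ hx]

lemma ZMod.inv_pow_of_isUnit {n : ℕ} {x : ZMod n} (hx : IsUnit x) (m : ℕ) :
    (x ^ m)⁻¹ = x⁻¹ ^ m :=
  ZMod.inv_eq_of_mul_eq_one n _ _ (by rw [← mul_pow, ZMod.mul_inv_of_unit x hx, one_pow])

theorem markov_wahl_parameter_general (a₁ a₂ a₃ : ℕ) (h₁ : 0 < a₁) (h₂ : 0 < a₂) (h₃ : 0 < a₃)
    (h : a₁ ^ 2 + a₂ ^ 2 + a₃ ^ 2 = 3 * a₁ * a₂ * a₃) :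
    IsUnit (a₂ : ZMod a₁) ∧
    (((a₂ ^ 2 + a₃ ^ 2) / a₁ : ℕ) : ZMod a₁) * ((a₂ : ZMod a₁) ^ 2)⁻¹ =
      3 * (a₂ : ZMod a₁)⁻¹ * (a₃ : ZMod a₁) := by
  have hu : IsUnit (a₂ : ZMod a₁) := (ZMod.isUnit_iff_coprime a₂ a₁).mpr <|
    Nat.coprime_of_sq_add_sq_add_sq_eq_mul le_rfl h₂ h₁ h₃ (by linear_combination h)
  have hq : (((a₂ ^ 2 + a₃ ^ 2) / a₁ : ℕ) : ZMod a₁) = 3 * a₂ * a₃ := by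
    have := congrArg (Nat.cast : ℕ → ZMod a₁) (Nat.div_add_eq_of_sq_add_sq_add_sq_eq_mul h₁ h)
    push_cast at this
    rwa [ZMod.natCast_self, add_zero] at this
  refine ⟨hu, ?_⟩
  rw [hq, ZMod.inv_pow_of_isUnit hu]
  linear_combination (3 * (a₃ : ZMod a₁) * (a₂ : ZMod a₁)⁻¹) * ZMod.mul_inv_of_unit _ hu

/-- Let `(a₁, a₂, a₃)` be a Markov triple with `a₁ > 1`. Then `a₂` is
invertible modulo `a₁`, and in `ℤ/a₁ℤ` one has
`((a₂² + a₃²)/a₁) · (a₂²)⁻¹ = 3 · a₂⁻¹ · a₃`, where `(a₂² + a₃²)/a₁` denotes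
the integer quotient. -/
theorem markov_wahl_parameter (a₁ a₂ a₃ : ℕ) (h₁ : 0 < a₁) (h₂ : 0 < a₂) (h₃ : 0 < a₃)
    (h : a₁ ^ 2 + a₂ ^ 2 + a₃ ^ 2 = 3 * a₁ * a₂ * a₃) (h₁' : 1 < a₁) :
    IsUnit (a₂ : ZMod a₁) ∧
    (((a₂ ^ 2 + a₃ ^ 2) / a₁ : ℕ) : ZMod a₁) * ((a₂ : ZMod a₁) ^ 2)⁻¹ =
      3 * (a₂ : ZMod a₁)⁻¹ * (a₃ : ZMod a₁) :=
  markov_wahl_parameter_general a₁ a₂ a₃ h₁ h₂ h₃ h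
end

section
/- Let (a₁, a₂, a₃) be a Markov triple. Then a₂ is invertible modulo a₁², and in ℤ/a₁²ℤ one has (a₃ · a₂⁻¹)² = 3 · a₁ · (a₃ · a₂⁻¹) − 1. -/
/-!
A common divisor `d` of two entries of a Markov triple divides the third, and dividing by `d`
gives a positive solution of `x² + y² + z² = 3d·xyz`. Hurwitz's descent rules this out for
`d ≥ 2`: if `x ≥ y ≥ z` solves `x² + y² + z² = kxyz` with `k ≥ 5`, then the other root
`w = kyz - x = (y² + z²)/x` of the quadratic in `x` is a smaller positive solution. So `a₂` is
a unit mod `a₁²`, and since `a₁² = 0` there, the Markov equation divided by `a₂²` is the claim.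
-/

theorem exists_lt_sq_add_sq_add_sq_eq_mul {k x y z : ℕ} (hk : 5 ≤ k) (hz : 0 < z) (hzy : z ≤ y)
    (hyx : y ≤ x) (h : x ^ 2 + y ^ 2 + z ^ 2 = k * x * y * z) :
    ∃ w, 0 < w ∧ w < x ∧ w ^ 2 + y ^ 2 + z ^ 2 = k * w * y * z := by
  have hxk : x ≤ k * y * z :=
    Nat.le_of_mul_le_mul_right (c := x) (by nlinarith) (by omega)
  obtain ⟨w, hw⟩ : ∃ w, k * y * z = w + x := ⟨k * y * z - x, by omega⟩
  have hwx : w * x = y ^ 2 + z ^ 2 := by nlinarith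
  refine ⟨w, ?_, ?_, by nlinarith⟩
  · nlinarith
  · -- otherwise `x² ≤ y² + z² ≤ 2y²`, so the left side of `h` is `≤ 4y² < 5y² ≤ kxyz`
    by_contra! hxw
    have hx2 : x ^ 2 ≤ y ^ 2 + z ^ 2 := by nlinarith
    have hz2 : z ^ 2 ≤ y ^ 2 := Nat.pow_le_pow_left hzy 2
    have hk5 : 5 * y ^ 2 ≤ k * x * y * z := by
      calc 5 * y ^ 2 = 5 * y * y * 1 := by ring
        _ ≤ k * x * y * z := by gcongr; omega
    have hy2 : 0 < y ^ 2 := pow_pos (by omega) 2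
    omega

theorem sq_add_sq_add_sq_ne_mul {k : ℕ} (hk : 5 ≤ k) {x y z : ℕ} (hx : 0 < x) (hy : 0 < y)
    (hz : 0 < z) : x ^ 2 + y ^ 2 + z ^ 2 ≠ k * x * y * z := by
  induction hs : x + y + z using Nat.strong_induction_on generalizing x y z with
  | _ s ih =>
  wlog hyx : y ≤ x generalizing x y
  · exact fun h ↦ this hy hx (by omega) (by omega) (by linarith [h])
  wlog hzx : z ≤ x generalizing x z
  · exact fun h ↦ this hx hz (by omega) (by omega) (by omega) (by linarith [h])
  wlog hzy : z ≤ y generalizing y z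
  · exact fun h ↦ this hz hy (by omega) (by omega) (by omega) (by omega) (by linarith [h])
  intro h
  obtain ⟨w, hw, hwx, hw'⟩ := exists_lt_sq_add_sq_add_sq_eq_mul hk hz hzy hyx h
  exact ih (w + y + z) (by omega) hw hy hz rfl hw'

theorem Nat.coprime_of_sq_add_sq_add_sq_eq_three_mul {x y z : ℕ} (hx : 0 < x) (hy : 0 < y)
    (hz : 0 < z) (h : x ^ 2 + y ^ 2 + z ^ 2 = 3 * x * y * z) : Nat.Coprime x y := by
  set d := x.gcd y
  have hdx : d ∣ x := x.gcd_dvd_left y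
  have hdy : d ∣ y := x.gcd_dvd_right y
  have hdz : d ∣ z := by
    rw [← Nat.pow_dvd_pow_iff two_ne_zero]
    have hxy : d ^ 2 ∣ x ^ 2 + y ^ 2 :=
      dvd_add (pow_dvd_pow_of_dvd hdx 2) (pow_dvd_pow_of_dvd hdy 2)
    have hxyz : d ^ 2 ∣ 3 * x * y * z := by
      rw [sq]; exact (mul_dvd_mul (hdx.mul_left 3) hdy).mul_right z
    exact (Nat.dvd_add_right hxy).mp (h ▸ hxyz)
  obtain ⟨x', hx'⟩ := hdx
  obtain ⟨y', hy'⟩ := hdy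
  obtain ⟨z', hz'⟩ := hdz
  rw [hx', hy', hz'] at h
  have hd : 0 < d := Nat.gcd_pos_of_pos_left y hx
  have h' : x' ^ 2 + y' ^ 2 + z' ^ 2 = 3 * d * x' * y' * z' :=
    Nat.eq_of_mul_eq_mul_left (pow_pos hd 2) (by linarith [h])
  by_contra hne
  have hd2 : 2 ≤ d := by have : d ≠ 1 := hne; omega
  exact sq_add_sq_add_sq_ne_mul (by omega) (Nat.pos_of_mul_pos_left (hx' ▸ hx))
    (Nat.pos_of_mul_pos_left (hy' ▸ hy)) (Nat.pos_of_mul_pos_left (hz' ▸ hz)) h'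

theorem sq_mul_eq_three_mul_mul_sub_one {R : Type*} [CommRing R] {a₁ a₂ a₃ u : R}
    (h₀ : a₁ ^ 2 = 0) (hu : a₂ * u = 1) (h : a₁ ^ 2 + a₂ ^ 2 + a₃ ^ 2 = 3 * a₁ * a₂ * a₃) :
    (a₃ * u) ^ 2 = 3 * a₁ * (a₃ * u) - 1 := by
  linear_combination u ^ 2 * h - u ^ 2 * h₀ + (3 * a₁ * a₃ * u - a₂ * u - 1) * hu

/-- Let `(a₁, a₂, a₃)` be a Markov triple. Then `a₂` is invertible modulo
`a₁²`, and in `ℤ/a₁²ℤ` one has `(a₃ · a₂⁻¹)² = 3 · a₁ · (a₃ · a₂⁻¹) − 1`. -/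
theorem markov_wahl_congruence (a₁ a₂ a₃ : ℕ) (h₁ : 0 < a₁) (h₂ : 0 < a₂) (h₃ : 0 < a₃)
    (h : a₁ ^ 2 + a₂ ^ 2 + a₃ ^ 2 = 3 * a₁ * a₂ * a₃) :
    IsUnit (a₂ : ZMod (a₁ ^ 2)) ∧
    ((a₃ : ZMod (a₁ ^ 2)) * (a₂ : ZMod (a₁ ^ 2))⁻¹) ^ 2 =
      3 * (a₁ : ZMod (a₁ ^ 2)) * ((a₃ : ZMod (a₁ ^ 2)) * (a₂ : ZMod (a₁ ^ 2))⁻¹) - 1 := by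
  have hcop : Nat.Coprime a₂ a₁ :=
    Nat.coprime_of_sq_add_sq_add_sq_eq_three_mul h₂ h₁ h₃ (by linarith [h])
  have hu : IsUnit (a₂ : ZMod (a₁ ^ 2)) := (ZMod.isUnit_iff_coprime _ _).mpr (hcop.pow_right 2)
  have hsq : (a₁ : ZMod (a₁ ^ 2)) ^ 2 = 0 := by exact_mod_cast ZMod.natCast_self (a₁ ^ 2)
  have hmarkov := congrArg (Nat.cast : ℕ → ZMod (a₁ ^ 2)) h
  push_cast at hmarkov
  exact ⟨hu, sq_mul_eq_three_mul_mul_sub_one hsq (ZMod.mul_inv_of_unit _ hu) hmarkov⟩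
end
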